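/- arXiv:1201.6654 — 6 statements merged into one kernel-verified Lean document; each statement's English description precedes it below -/
import Mathlib

section
/- For every ε, δ > 0 there exists a constant C = C(ε,δ) such that the following holds. Let 𝒢 be a d-regular simple graph on n vertices (d ≥ 1) and let α ∈ [0,1]. Suppose that every set A of vertices with |A| ≥ (α + δ)·n satisfies 2·e(𝒢[A]) ≥ ε·|A|·d, where e(𝒢[A]) is the number of edges of 𝒢 with both endpoints in A. Then for every integer m ≥ C·n/d, the number of independent sets of size m in 𝒢 satisfies I(𝒢,m) ≤ binom(⌈(α + 2δ)·n⌉, m). -/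
/-!
Kleitman–Winston container argument. Run the following greedy procedure on an independent set
`I`: while more than `(α + δ) n` vertices remain, take a vertex `v` of maximum degree in what
remains; if `v ∈ I`, record it and delete `v` with its neighbours, otherwise delete `v` alone.
By the density hypothesis every recorded vertex removes at least `ε d` vertices, so at most
`q = n / (ε d)` vertices are recorded, and the procedure can be replayed from the recorded set `S`
alone. Hence `I ⊆ S ∪ c(S)` for a container `c(S)` of at most `(α + δ) n` vertices, and
`I(𝒢, m) ≤ ∑_{s ≤ q} binom(n, s) binom((α + δ) n, m - s)`. As `m ≥ C n / d` makes `q` a small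
fraction of `m`, each summand is at most `binom((α + 2δ) n, m) / (q + 1)`: enlarging the ground
set by the factor `1 + δ` gains a factor exponential in `m`, which beats the `binom(n, s)`
choices of the fingerprint.
-/

def IsIndepFinset {V : Type*} (G : SimpleGraph V) (s : Finset V) : Prop :=
  ∀ x ∈ s, ∀ y ∈ s, ¬ G.Adj x y

open Finset Real
open scoped Nat

namespace KleitmanWinston

section Containers

variable {V : Type*} (G : SimpleGraph V) [DecidableRel G.Adj]

lemma card_filter_adj_product_eq_sum (A : Finset V) :
    #{p ∈ A ×ˢ A | G.Adj p.1 p.2} = ∑ v ∈ A, #{w ∈ A | G.Adj v w} := by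
  simp only [card_filter, sum_product]

noncomputable def maxDegVertex (A : Finset V) (hA : A.Nonempty) : V :=
  (A.exists_max_image (fun v => #{w ∈ A | G.Adj v w}) hA).choose

lemma maxDegVertex_mem {A : Finset V} (hA : A.Nonempty) : maxDegVertex G A hA ∈ A :=
  (A.exists_max_image _ hA).choose_spec.1

lemma le_card_filter_adj_maxDegVertex {A : Finset V} (hA : A.Nonempty) {D : ℕ}
    (h : ∃ v ∈ A, D ≤ #{w ∈ A | G.Adj v w}) :
    D ≤ #{w ∈ A | G.Adj (maxDegVertex G A hA) w} := by
  obtain ⟨v, hv, hD⟩ := h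
  exact hD.trans <| (A.exists_max_image (fun v => #{w ∈ A | G.Adj v w}) hA).choose_spec.2 v hv

lemma exists_le_card_filter_adj {A : Finset V} (hA : A.Nonempty) {θ : ℝ}
    (h : θ * #A ≤ #{p ∈ A ×ˢ A | G.Adj p.1 p.2}) : ∃ v ∈ A, ⌈θ⌉₊ ≤ #{w ∈ A | G.Adj v w} := by
  rw [card_filter_adj_product_eq_sum, Nat.cast_sum, mul_comm, ← nsmul_eq_mul, ← sum_const] at h
  obtain ⟨v, hv, hθ⟩ := exists_le_of_sum_le hA h
  exact ⟨v, hv, Nat.ceil_le.mpr hθ⟩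

theorem card_le_of_isIndepFinset {R D : ℕ} (hD0 : 0 < D)
    (hD : ∀ A : Finset V, R < #A → ∃ v ∈ A, D ≤ #{w ∈ A | G.Adj v w})
    {I : Finset V} (hI : IsIndepFinset G I) : #I ≤ R := by
  by_contra! hR
  obtain ⟨v, hv, hdeg⟩ := hD I hR
  rw [filter_eq_empty_iff.mpr fun w hw => hI v hv w hw, card_empty] at hdeg
  omega

variable [DecidableEq V]

lemma card_filter_not_adj_erase {A : Finset V} {v : V} (hv : v ∈ A) :
    #{w ∈ A.erase v | ¬ G.Adj v w} + #{w ∈ A | G.Adj v w} + 1 = #A := by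
  have hadj : {w ∈ A.erase v | G.Adj v w} = {w ∈ A | G.Adj v w} := by
    ext w
    simp only [mem_filter, mem_erase, and_congr_left_iff, and_iff_right_iff_imp]
    exact fun h _ => (G.ne_of_adj h).symm
  rw [← hadj, add_comm #_, card_filter_add_card_filter_not, card_erase_add_one hv]

lemma inter_subset_insert_inter_filter_not_adj {I : Finset V} (hI : IsIndepFinset G I) {v : V}
    (hv : v ∈ I) (A : Finset V) : I ∩ A ⊆ insert v (I ∩ {w ∈ A.erase v | ¬ G.Adj v w}) := by
  intro w hw
  obtain ⟨hwI, hwA⟩ := mem_inter.mp hw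
  rcases eq_or_ne w v with rfl | hwv
  · exact mem_insert_self w _
  exact mem_insert_of_mem
    (mem_inter.mpr ⟨hwI, mem_filter.mpr ⟨mem_erase.mpr ⟨hwv, hwA⟩, hI v hv w hwI⟩⟩)

def pruneStep (W A : Finset V) (v : V) : Finset V :=
  if v ∈ W then {w ∈ A.erase v | ¬ G.Adj v w} else A.erase v

lemma pruneStep_subset (W A : Finset V) (v : V) : pruneStep G W A v ⊆ A.erase v := by
  unfold pruneStep
  split_ifs
  exacts [filter_subset _ _, subset_rfl]

lemma card_pruneStep_lt {W A : Finset V} {v : V} (hv : v ∈ A) : #(pruneStep G W A v) < #A :=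
  (card_le_card (pruneStep_subset G W A v)).trans_lt (card_erase_lt_of_mem hv)

lemma pruneStep_congr {W W' A : Finset V} {v : V} (hv : v ∈ A) (h : W ∩ A = W' ∩ A) :
    pruneStep G W A v = pruneStep G W' A v := by
  have : v ∈ W ↔ v ∈ W' := by simpa [hv] using congrArg (v ∈ ·) h
  simp only [pruneStep, this]

noncomputable def container (R : ℕ) (W A : Finset V) : Finset V :=
  if h : R < #A then
    container R W (pruneStep G W A (maxDegVertex G A (card_pos.mp (by omega))))
  else A
termination_by #A
decreasing_by exact card_pruneStep_lt G (maxDegVertex_mem G _)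

lemma container_of_lt {R : ℕ} (W : Finset V) {A : Finset V} (hR : R < #A) :
    container G R W A =
      container G R W (pruneStep G W A (maxDegVertex G A (card_pos.mp (by omega)))) := by
  rw [container, dif_pos hR]

lemma container_of_le {R : ℕ} (W : Finset V) {A : Finset V} (hR : #A ≤ R) :
    container G R W A = A := by
  rw [container, dif_neg hR.not_gt]

lemma card_container_le (R : ℕ) (W A : Finset V) : #(container G R W A) ≤ R := by
  fun_induction container G R W A <;> omega

lemma container_congr (R : ℕ) {W W' A : Finset V} (h : W ∩ A = W' ∩ A) :
    container G R W A = container G R W' A := by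
  fun_induction container G R W A generalizing W' with
  | case1 A hR ih =>
    have hA : A.Nonempty := card_pos.mp (by omega)
    have hsub : pruneStep G W A (maxDegVertex G A hA) ⊆ A :=
      (pruneStep_subset G W A _).trans (erase_subset _ A)
    rw [container_of_lt G W' hR, ← pruneStep_congr G (maxDegVertex_mem G hA) h]
    apply ih
    rw [← inter_eq_right.mpr hsub, ← inter_assoc, ← inter_assoc, h]
  | case2 A hR => rw [container_of_le G W' (not_lt.mp hR)]

/-- Run on `S` instead of `I`, the algorithm makes the same choices (`container_congr`), so the
container of `I` is a function of its fingerprint `S`. -/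
theorem exists_fingerprint {R D : ℕ}
    (hD : ∀ A : Finset V, R < #A → ∃ v ∈ A, D ≤ #{w ∈ A | G.Adj v w})
    {I : Finset V} (hI : IsIndepFinset G I) (A : Finset V) :
    ∃ S ⊆ I ∩ A, I ∩ A ⊆ S ∪ container G R S A ∧ D * #S + #(container G R S A) ≤ #A := by
  induction A using Finset.strongInduction with
  | H A ih =>
  by_cases hR : R < #A
  swap
  · refine ⟨∅, empty_subset _, ?_, ?_⟩ <;> rw [container_of_le G _ (not_lt.mp hR)]
    exacts [inter_subset_right.trans subset_union_right, by simp]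
  have hA : A.Nonempty := card_pos.mp (by omega)
  set v := maxDegVertex G A hA
  have hvA : v ∈ A := maxDegVertex_mem G hA
  have hdeg : D ≤ #{w ∈ A | G.Adj v w} := le_card_filter_adj_maxDegVertex G hA (hD A hR)
  by_cases hvI : v ∈ I
  · set A' := {w ∈ A.erase v | ¬ G.Adj v w}
    have hvA' : v ∉ A' := fun h => by simp [A'] at h
    obtain ⟨S, hSI, hcover, hcard⟩ := ih A' ((filter_subset _ _).trans_ssubset (erase_ssubset hvA))
    have hvS : v ∉ S := fun h => hvA' (mem_inter.mp (hSI h)).2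
    have hc : container G R (insert v S) A = container G R S A' := by
      rw [container_of_lt G _ hR, pruneStep, if_pos (mem_insert_self v S)]
      exact container_congr G R (insert_inter_of_notMem hvA')
    refine ⟨insert v S, insert_subset (mem_inter.mpr ⟨hvI, hvA⟩) ?_, ?_, ?_⟩
    · exact hSI.trans (inter_subset_inter_left (filter_subset _ _ |>.trans (erase_subset v A)))
    · rw [hc, insert_union]
      exact (inter_subset_insert_inter_filter_not_adj G hI hvI A).trans
        (insert_subset_insert v hcover)
    · rw [hc, card_insert_of_notMem hvS]
      have := card_filter_not_adj_erase G hvA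
      nlinarith
  · obtain ⟨S, hSI, hcover, hcard⟩ := ih (A.erase v) (erase_ssubset hvA)
    have hvS : v ∉ S := fun h => hvI (mem_inter.mp (hSI h)).1
    have hc : container G R S A = container G R S (A.erase v) := by
      rw [container_of_lt G _ hR, pruneStep, if_neg hvS]
    refine ⟨S, hSI.trans (inter_subset_inter_left (erase_subset v A)), ?_, ?_⟩ <;> rw [hc]
    · intro w hw
      obtain ⟨hwI, hwA⟩ := mem_inter.mp hw
      exact hcover (mem_inter.mpr ⟨hwI, mem_erase.mpr ⟨fun h => hvI (h ▸ hwI), hwA⟩⟩)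
    · exact hcard.trans card_erase_le

end Containers

section Counting

variable {V : Type*} [Fintype V]

lemma ncard_indepFinsets_le_choose (G : SimpleGraph V) (m : ℕ) :
    ({I : Finset V | #I = m ∧ IsIndepFinset G I} : Set (Finset V)).ncard ≤
      (Fintype.card V).choose m := by
  calc _ ≤ (↑(powersetCard m (univ : Finset V)) : Set (Finset V)).ncard :=
        Set.ncard_le_ncard fun I hI => by simpa using hI.1
    _ = (Fintype.card V).choose m := by rw [Set.ncard_coe_finset, card_powersetCard, card_univ]

variable [DecidableEq V]

theorem ncard_le_sum_choose_of_fingerprints (F : Set (Finset V)) (c : Finset V → Finset V)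
    {m q R : ℕ} (hc : ∀ S, #(c S) ≤ R)
    (hF : ∀ I ∈ F, #I = m ∧ ∃ S ⊆ I, #S ≤ q ∧ I ⊆ S ∪ c S) :
    F.ncard ≤ ∑ s ∈ range (q + 1), (Fintype.card V).choose s * R.choose (m - s) := by
  have hsub : F ⊆ ↑((range (q + 1)).biUnion fun s => (powersetCard s univ).biUnion fun S =>
      (powersetCard (m - s) (c S)).image (S ∪ ·)) := by
    intro I hI
    obtain ⟨hIm, S, hSI, hSq, hIc⟩ := hF I hI
    simp only [mem_coe, mem_biUnion, mem_range, mem_powersetCard, mem_image]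
    refine ⟨#S, by omega, S, ⟨subset_univ S, rfl⟩, I \ S, ?_, union_sdiff_of_subset hSI⟩
    rw [card_sdiff_of_subset hSI, hIm]
    exact ⟨sdiff_le_iff.mpr hIc, rfl⟩
  refine (Set.ncard_le_ncard hsub).trans ?_
  rw [Set.ncard_coe_finset]
  refine card_biUnion_le.trans (sum_le_sum fun s _ => card_biUnion_le.trans ?_)
  calc ∑ S ∈ powersetCard s univ, #((powersetCard (m - s) (c S)).image (S ∪ ·))
      ≤ ∑ _S ∈ powersetCard s (univ : Finset V), R.choose (m - s) := by
        refine sum_le_sum fun S _ => card_image_le.trans ?_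
        rw [card_powersetCard]
        exact Nat.choose_le_choose _ (hc S)
    _ = (Fintype.card V).choose s * R.choose (m - s) := by
        rw [sum_const, card_powersetCard, card_univ, smul_eq_mul]

theorem ncard_indepFinsets_le_sum_choose (G : SimpleGraph V) [DecidableRel G.Adj] {R D : ℕ}
    (hD0 : 0 < D) (hD : ∀ A : Finset V, R < #A → ∃ v ∈ A, D ≤ #{w ∈ A | G.Adj v w}) (m : ℕ) :
    ({I : Finset V | #I = m ∧ IsIndepFinset G I} : Set (Finset V)).ncard ≤
      ∑ s ∈ range (Fintype.card V / D + 1), (Fintype.card V).choose s * R.choose (m - s) := by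
  refine ncard_le_sum_choose_of_fingerprints _ (fun S => container G R S univ)
    (fun S => card_container_le G R S univ) fun I ⟨hIm, hI⟩ => ⟨hIm, ?_⟩
  obtain ⟨S, hSI, hcover, hcard⟩ := exists_fingerprint G hD hI univ
  rw [inter_univ] at hSI hcover
  rw [card_univ] at hcard
  exact ⟨S, hSI, (Nat.le_div_iff_mul_le hD0).mpr (by linarith), hcover⟩

end Counting

lemma cast_choose_succ_mul {n t : ℕ} (h : t ≤ n) :
    (n.choose (t + 1) : ℝ) * (t + 1) = n.choose t * (n - t) := by
  rw [← Nat.cast_sub h]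
  exact_mod_cast Nat.choose_succ_right_eq n t

lemma choose_mul_le_choose_succ {n t : ℕ} {y : ℝ} (hy : 0 ≤ y) (hyt : y * (t + 1) ≤ n - t) :
    (n.choose t : ℝ) * y ≤ n.choose (t + 1) := by
  have htn : (t : ℝ) ≤ n := by nlinarith
  have hn := cast_choose_succ_mul (n := n) (t := t) (by exact_mod_cast htn)
  have hc : (0 : ℝ) ≤ n.choose t := Nat.cast_nonneg _
  refine le_of_mul_le_mul_right ?_ (by positivity : (0 : ℝ) < t + 1)
  rw [hn, mul_assoc]
  exact mul_le_mul_of_nonneg_left hyt hc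

lemma choose_mul_pow_le_choose {R K : ℕ} {x : ℝ} (hx : 1 ≤ x) (hxR : x * R ≤ K) (t : ℕ) :
    (R.choose t : ℝ) * x ^ t ≤ K.choose t := by
  induction t with
  | zero => simp
  | succ t ih =>
    rcases le_or_gt R t with hRt | htR
    · simp [Nat.choose_eq_zero_of_lt (Nat.lt_succ_of_le hRt)]
    have htR' : (t : ℝ) < R := by exact_mod_cast htR
    have hR := cast_choose_succ_mul htR.le
    have hK := cast_choose_succ_mul (n := K) (t := t) (by
      have : (t : ℝ) ≤ K := by nlinarith
      exact_mod_cast this)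
    have hxt : x * (R - t) ≤ K - t := by nlinarith
    refine le_of_mul_le_mul_right ?_ (by positivity : (0 : ℝ) < t + 1)
    calc (R.choose (t + 1) : ℝ) * x ^ (t + 1) * (t + 1)
        = R.choose t * x ^ t * (x * (R - t)) := by rw [mul_right_comm, hR]; ring
      _ ≤ K.choose t * (K - t) :=
        mul_le_mul ih hxt (by nlinarith) (Nat.cast_nonneg _)
      _ = K.choose (t + 1) * (t + 1) := hK.symm

lemma choose_sub_mul_pow_le_choose {K m : ℕ} {y : ℝ} (hy : 0 ≤ y) (hym : y * m ≤ K + 1 - m) :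
    ∀ s ≤ m, (K.choose (m - s) : ℝ) * y ^ s ≤ K.choose m := by
  intro s
  induction s with
  | zero => simp
  | succ s ih =>
    intro hs
    obtain ⟨j, hj⟩ : ∃ j, m - s = j + 1 := ⟨m - (s + 1), by omega⟩
    have hjm : (j : ℝ) + 1 ≤ m := by exact_mod_cast (show j + 1 ≤ m by omega)
    have hstep : (K.choose j : ℝ) * y ≤ K.choose (j + 1) :=
      choose_mul_le_choose_succ hy (by nlinarith)
    calc (K.choose (m - (s + 1)) : ℝ) * y ^ (s + 1) = K.choose j * y * y ^ s := by
          rw [show m - (s + 1) = j by omega]; ring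
      _ ≤ K.choose (m - s) * y ^ s := by
          rw [hj]; exact mul_le_mul_of_nonneg_right hstep (by positivity)
      _ ≤ K.choose m := ih (by omega)

noncomputable def growthRate (δ : ℝ) : ℝ := log (1 + δ) / 4

/-- Chosen so that `sizeRatio δ * q ≤ m` gives both `q ≤ m / 2` and
`q * (1 + log (1 / (δ * growthRate δ))) ≤ growthRate δ * m`. -/
noncomputable def sizeRatio (δ : ℝ) : ℝ :=
  max 2 ((1 + log (1 / (δ * growthRate δ))) / growthRate δ)

lemma two_le_sizeRatio (δ : ℝ) : 2 ≤ sizeRatio δ := le_max_left _ _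

lemma succ_mul_pow_div_factorial_le {δ : ℝ} (hδ : 0 < δ) (hδ1 : δ ≤ 1) {m q s : ℕ}
    (hq : sizeRatio δ * q ≤ m) (hs : s ≤ q) :
    (q + 1) * ((m / δ) ^ s / s !) ≤ (1 + δ) ^ (m - s) := by
  set η := growthRate δ
  set a := 1 / (δ * η)
  have hlog : 0 < log (1 + δ) := log_pos (by linarith)
  have hη : 0 < η := div_pos hlog four_pos
  have hηδ : η ≤ δ / 4 := by
    have := log_le_sub_one_of_pos (by linarith : (0 : ℝ) < 1 + δ)
    simp only [η, growthRate]; linarith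
  have ha : 1 ≤ a := by
    rw [le_div_iff₀ (by positivity), one_mul]; nlinarith
  have hT2 := two_le_sizeRatio δ
  have hTa : 1 + log a ≤ η * sizeRatio δ := by
    rw [← div_le_iff₀' hη]; exact le_max_right _ _
  have hq0 : (0 : ℝ) ≤ q := Nat.cast_nonneg q
  have hsm : (s : ℝ) ≤ m / 2 := by
    have : (s : ℝ) ≤ q := by exact_mod_cast hs
    nlinarith
  have hexp_q : (q : ℝ) + 1 ≤ exp q := by linarith [add_one_le_exp (q : ℝ)]
  have hpow : (m / δ) ^ s / s ! ≤ exp (q * log a) * exp (η * m) := by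
    have hsplit : (m / δ) ^ s / s ! = a ^ s * ((η * m) ^ s / s !) := by
      rw [mul_div_assoc', ← mul_pow]; congr 2; simp only [a]; field_simp
    rw [hsplit, exp_nat_mul, exp_log (by linarith)]
    exact mul_le_mul (pow_le_pow_right₀ ha hs) (pow_div_factorial_le_exp _ (by positivity) s)
      (by positivity) (by positivity)
  calc (q + 1) * ((m / δ) ^ s / s !) ≤ exp q * (exp (q * log a) * exp (η * m)) :=
        mul_le_mul hexp_q hpow (by positivity) (by positivity)
    _ = exp (q * (1 + log a) + η * m) := by rw [← exp_add, ← exp_add]; ring_nf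
    _ ≤ exp (m / 2 * log (1 + δ)) := by
        refine exp_le_exp.mpr ?_
        have : q * (1 + log a) ≤ η * m := by nlinarith
        simp only [η, growthRate] at this ⊢
        linarith
    _ ≤ (1 + δ) ^ (m - s) := by
        rw [← rpow_natCast, rpow_def_of_pos (by linarith), mul_comm]
        gcongr
        have : s ≤ m := by
          have : (s : ℝ) ≤ m := by linarith [Nat.cast_nonneg (α := ℝ) m]
          exact_mod_cast this
        push_cast [this]
        linarith

lemma succ_mul_choose_mul_choose_le {N R K m q s : ℕ} {δ : ℝ} (hδ : 0 < δ) (hs : s ≤ m)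
    (hRK : (1 + δ) * R ≤ K) (hKm : δ * N ≤ K + 1 - m)
    (hkey : (q + 1) * ((m / δ) ^ s / s !) ≤ (1 + δ) ^ (m - s)) :
    (q + 1) * (N.choose s * R.choose (m - s)) ≤ K.choose m := by
  rcases m.eq_zero_or_pos with rfl | hm
  · obtain rfl : s = 0 := by omega
    simpa using hkey
  set y := δ * N / m
  have hm' : (0 : ℝ) < m := by exact_mod_cast hm
  have hN : (N : ℝ) ^ s = (m / δ) ^ s * y ^ s := by
    rw [← mul_pow]; congr 1; simp only [y]; field_simp
  have hR := choose_mul_pow_le_choose (x := 1 + δ) (by linarith) hRK (m - s)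
  have hK := choose_sub_mul_pow_le_choose (K := K) (y := y) (by positivity)
    (by simp only [y]; rwa [div_mul_cancel₀ _ hm'.ne']) s hs
  rify
  calc ((q : ℝ) + 1) * (N.choose s * R.choose (m - s))
      ≤ (q + 1) * ((N : ℝ) ^ s / s ! * R.choose (m - s)) := by
        gcongr; exact Nat.choose_le_pow_div s N
    _ = (q + 1) * ((m / δ) ^ s / s !) * R.choose (m - s) * y ^ s := by rw [hN]; ring
    _ ≤ (1 + δ) ^ (m - s) * R.choose (m - s) * y ^ s := by gcongr
    _ ≤ K.choose (m - s) * y ^ s := by rw [mul_comm ((1 + δ) ^ _)]; gcongr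
    _ ≤ K.choose m := hK

theorem sum_choose_mul_choose_le_choose {N R K m q : ℕ} {δ : ℝ} (hδ : 0 < δ) (hδ1 : δ ≤ 1)
    (hRK : (1 + δ) * R ≤ K) (hKm : δ * N ≤ K + 1 - m) (hq : sizeRatio δ * q ≤ m) :
    ∑ s ∈ range (q + 1), N.choose s * R.choose (m - s) ≤ K.choose m := by
  have hqm : q ≤ m := by
    have : (q : ℝ) ≤ m := by nlinarith [two_le_sizeRatio δ, Nat.cast_nonneg (α := ℝ) q]
    exact_mod_cast this
  refine Nat.le_of_mul_le_mul_left ?_ q.succ_pos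
  calc (q + 1) * ∑ s ∈ range (q + 1), N.choose s * R.choose (m - s)
      ≤ ∑ _s ∈ range (q + 1), K.choose m := by
        rw [mul_sum]
        refine sum_le_sum fun s hs => ?_
        have hsq : s ≤ q := Nat.lt_succ_iff.mp (mem_range.mp hs)
        exact succ_mul_choose_mul_choose_le hδ (hsq.trans hqm) hRK hKm
          (succ_mul_pow_div_factorial_le hδ hδ1 hq hsq)
    _ = (q + 1) * K.choose m := by rw [sum_const, card_range, smul_eq_mul]

section Conclusion

variable {V : Type*} [Fintype V] [DecidableEq V]

theorem ncard_indepFinsets_le_choose_of_dense (G : SimpleGraph V) [DecidableRel G.Adj]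
    {R D K m : ℕ} {δ : ℝ} (hδ : 0 < δ) (hδ1 : δ ≤ 1) (hD0 : 0 < D)
    (hD : ∀ A : Finset V, R < #A → ∃ v ∈ A, D ≤ #{w ∈ A | G.Adj v w})
    (hRK : (1 + δ) * R ≤ K) (hKR : δ * Fintype.card V + R ≤ K + 1)
    (hq : sizeRatio δ * (Fintype.card V / D : ℕ) ≤ m) :
    ({I : Finset V | #I = m ∧ IsIndepFinset G I} : Set (Finset V)).ncard ≤ K.choose m := by
  rcases le_or_gt m R with hmR | hmR
  · refine (ncard_indepFinsets_le_sum_choose G hD0 hD m).trans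
      (sum_choose_mul_choose_le_choose hδ hδ1 hRK ?_ hq)
    have : (m : ℝ) ≤ R := by exact_mod_cast hmR
    linarith
  · have hempty : {I : Finset V | #I = m ∧ IsIndepFinset G I} = ∅ :=
      Set.eq_empty_of_forall_notMem fun I ⟨hIm, hI⟩ =>
        (card_le_of_isIndepFinset G hD0 hD hI).not_gt (hIm ▸ hmR)
    simp [hempty]

end Conclusion

end KleitmanWinston

open KleitmanWinston

theorem stmt_4 :
    ∀ ε δ : ℝ, 0 < ε → 0 < δ →
      ∃ C : ℝ,
        ∀ (V : Type) [Fintype V] [DecidableEq V] (G : SimpleGraph V) [DecidableRel G.Adj]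
          (d : ℕ), 1 ≤ d → G.IsRegularOfDegree d →
          ∀ α : ℝ, 0 ≤ α → α ≤ 1 →
            -- `2·e(𝒢[A])` is the number of ordered adjacent pairs with both ends in `A`
            (∀ A : Finset V, (α + δ) * (Fintype.card V : ℝ) ≤ (A.card : ℝ) →
              ε * (A.card : ℝ) * (d : ℝ) ≤
                (((A ×ˢ A).filter fun p => G.Adj p.1 p.2).card : ℝ)) →
            ∀ m : ℕ, C * (Fintype.card V : ℝ) / (d : ℝ) ≤ (m : ℝ) →
              (({s : Finset V | s.card = m ∧ IsIndepFinset G s} : Set (Finset V)).ncard : ℝ) ≤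
                ((⌈(α + 2 * δ) * (Fintype.card V : ℝ)⌉₊).choose m : ℝ) := by
  intro ε δ hε hδ
  refine ⟨sizeRatio δ / ε, fun V _ _ G _ d hd _ α hα0 _ hdense m hm => ?_⟩
  set N := Fintype.card V
  set K := ⌈(α + 2 * δ) * N⌉₊
  have hK : (α + 2 * δ) * N ≤ K := Nat.le_ceil _
  rcases le_or_gt 1 (α + 2 * δ) with hbig | hsmall
  · have hNK : N ≤ K := by exact_mod_cast (show (N : ℝ) ≤ K by nlinarith)
    exact_mod_cast (ncard_indepFinsets_le_choose G m).trans (Nat.choose_le_choose m hNK)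
  set R := ⌊(α + δ) * N⌋₊
  set D := ⌈ε * d⌉₊
  have hR : (R : ℝ) ≤ (α + δ) * N := Nat.floor_le (by positivity)
  have hεd : 0 < ε * d := by positivity
  have hD : ∀ A : Finset V, R < #A → ∃ v ∈ A, D ≤ #{w ∈ A | G.Adj v w} := fun A hA =>
    have hA' : (α + δ) * N < #A := (Nat.floor_lt (by positivity)).mp hA
    exists_le_card_filter_adj G (card_pos.mp (by omega)) (by linarith [hdense A hA'.le])
  have hq : sizeRatio δ * (N / D : ℕ) ≤ m := by
    have hND : ((N / D : ℕ) : ℝ) ≤ N / (ε * d) :=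
      Nat.cast_div_le.trans (div_le_div_of_nonneg_left N.cast_nonneg hεd (Nat.le_ceil _))
    calc sizeRatio δ * (N / D : ℕ) ≤ sizeRatio δ * (N / (ε * d)) :=
          mul_le_mul_of_nonneg_left hND (by linarith [two_le_sizeRatio δ])
      _ = sizeRatio δ / ε * N / d := by field_simp
      _ ≤ m := hm
  have hRK : (1 + δ) * R ≤ K := by
    nlinarith [mul_le_mul_of_nonneg_left hR (by linarith : (0 : ℝ) ≤ 1 + δ),
      mul_nonneg (mul_nonneg hδ.le (by linarith : (0 : ℝ) ≤ 1 - α - δ)) N.cast_nonneg]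
  exact_mod_cast ncard_indepFinsets_le_choose_of_dense G hδ (by linarith)
    (Nat.ceil_pos.mpr hεd) hD hRK (by linarith) hq
end

section
/- Let 𝒢 be a d-regular simple graph on n vertices and let λ(𝒢) denote the smallest eigenvalue of its adjacency matrix. Then for every set A of vertices of 𝒢, 2·e(𝒢[A]) ≥ (d/n)·|A|² + (λ(𝒢)/n)·|A|·(n − |A|), where e(𝒢[A]) is the number of edges of 𝒢 with both endpoints in A. -/
/-!
Let `x` be the indicator vector of `A` and `y = x - (|A|/n)·𝟙` its component orthogonal to
the all-ones vector. Since `𝟙` is an eigenvector of the adjacency matrix `M` of the `d`-regular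
graph, `yᵀMy = xᵀMx - d|A|²/n` and `yᵀy = |A|(n - |A|)/n`, while `xᵀMx = 2·e(𝒢[A])`.
The Rayleigh bound `λ·yᵀy ≤ yᵀMy` is then the claimed inequality.
-/

open Matrix Finset

lemma Matrix.IsHermitian.mul_dotProduct_self_le_dotProduct_mulVec {n : Type*} [Fintype n]
    [DecidableEq n] {M : Matrix n n ℝ} (hM : M.IsHermitian) {lam : ℝ}
    (hlam : ∀ μ ∈ spectrum ℝ M, lam ≤ μ) (y : n → ℝ) :
    lam * (y ⬝ᵥ y) ≤ y ⬝ᵥ (M *ᵥ y) := by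
  have hpsd : (M - lam • 1).PosSemidef := by
    refine posSemidef_iff_isHermitian_and_spectrum_nonneg.mpr
      ⟨hM.sub (isHermitian_one.smul (IsSelfAdjoint.all lam)), ?_⟩
    rw [← Algebra.algebraMap_eq_smul_one, ← spectrum.sub_singleton_eq]
    rintro _ ⟨μ, hμ, _, rfl, rfl⟩
    simpa using hlam μ hμ
  have := hpsd.dotProduct_mulVec_nonneg y
  rw [star_trivial, sub_mulVec, dotProduct_sub, smul_mulVec, one_mulVec, dotProduct_smul,
    smul_eq_mul] at this
  linarith

lemma Matrix.IsSymm.sub_smul_one_dotProduct_mulVec_sub_smul_one {n α : Type*} [Fintype n]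
    [CommRing α] {M : Matrix n n α} (hM : M.IsSymm) {r : α} (hr : M *ᵥ 1 = r • 1)
    (x : n → α) (c : α) :
    (x - c • 1) ⬝ᵥ M *ᵥ (x - c • 1) =
      x ⬝ᵥ M *ᵥ x - 2 * c * r * ∑ i, x i + c ^ 2 * r * Fintype.card n := by
  have hsymm : 1 ⬝ᵥ M *ᵥ x = x ⬝ᵥ M *ᵥ 1 := by
    rw [dotProduct_mulVec, ← mulVec_transpose, hM.eq, dotProduct_comm]
  simp only [mulVec_sub, mulVec_smul, sub_dotProduct, dotProduct_sub, smul_dotProduct,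
    dotProduct_smul, hsymm, hr, one_dotProduct_one]
  simp only [dotProduct_one, smul_eq_mul]
  ring

lemma SimpleGraph.IsRegularOfDegree.adjMatrix_mulVec_one {V α : Type*} [Fintype V]
    [NonAssocSemiring α] {G : SimpleGraph V} [DecidableRel G.Adj] {d : ℕ}
    (hd : G.IsRegularOfDegree d) : G.adjMatrix α *ᵥ 1 = (d : α) • 1 :=
  funext fun _ => by simpa using adjMatrix_mulVec_const_apply_of_regular hd (a := (1 : α))

lemma SimpleGraph.indicator_dotProduct_adjMatrix_mulVec {V α : Type*} [Fintype V]
    [NonAssocSemiring α] (G : SimpleGraph V) [DecidableRel G.Adj] (A : Finset V) :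
    (A : Set V).indicator 1 ⬝ᵥ G.adjMatrix α *ᵥ (A : Set V).indicator 1 =
      #{p ∈ A ×ˢ A | G.Adj p.1 p.2} := by
  classical
  rw [dotProduct_mulVec_adjMatrix, card_filter, sum_product]
  simp only [Set.indicator, Pi.one_apply, mem_coe, mul_ite, mul_one, mul_zero]
  simp [← sum_filter, filter_inter]

theorem stmt_5_general (V : Type) [Fintype V] [DecidableEq V]
    (G : SimpleGraph V) [DecidableRel G.Adj] (d : ℕ)
    (hreg : G.IsRegularOfDegree d)
    (lam : ℝ)
    (hmin : ∀ x ∈ spectrum ℝ (G.adjMatrix ℝ), lam ≤ x)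
    (A : Finset V) :
    -- `2·e(𝒢[A])` is the number of ordered adjacent pairs with both ends in `A`
    (d : ℝ) / (Fintype.card V : ℝ) * (A.card : ℝ) ^ 2 +
        lam / (Fintype.card V : ℝ) * (A.card : ℝ) * ((Fintype.card V : ℝ) - (A.card : ℝ)) ≤
      (((A ×ˢ A).filter fun p => G.Adj p.1 p.2).card : ℝ) := by
  obtain hV | hV := (Fintype.card V).eq_zero_or_pos
  · have hA : A.card = 0 := by have := A.card_le_univ; omega
    simp [hV, hA]
  set x : V → ℝ := (A : Set V).indicator 1
  set c : ℝ := A.card / Fintype.card V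
  have hsum : ∑ v, x v = A.card := by simp [x, Set.indicator_apply]
  have hself : x ⬝ᵥ x = A.card := by simp [x, dotProduct, Set.indicator_apply]
  have hnorm := (isSymm_one (n := V) (α := ℝ)).sub_smul_one_dotProduct_mulVec_sub_smul_one
    (by rw [one_mulVec, one_smul]) x c
  simp only [one_mulVec, hself, hsum] at hnorm
  have key :=
    (G.isHermitian_adjMatrix ℝ).mul_dotProduct_self_le_dotProduct_mulVec hmin (x - c • 1)
  rw [hnorm, G.isSymm_adjMatrix.sub_smul_one_dotProduct_mulVec_sub_smul_one
    hreg.adjMatrix_mulVec_one, hsum, G.indicator_dotProduct_adjMatrix_mulVec] at key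
  have hn : (0 : ℝ) < Fintype.card V := by exact_mod_cast hV
  simp only [c] at key
  field_simp at key ⊢
  linarith

theorem stmt_5 (V : Type) [Fintype V] [DecidableEq V]
    (G : SimpleGraph V) [DecidableRel G.Adj] (d : ℕ)
    (hreg : G.IsRegularOfDegree d)
    (lam : ℝ) (hmem : lam ∈ spectrum ℝ (G.adjMatrix ℝ))
    (hmin : ∀ x ∈ spectrum ℝ (G.adjMatrix ℝ), lam ≤ x)
    (A : Finset V) :
    -- `2·e(𝒢[A])` is the number of ordered adjacent pairs with both ends in `A`
    (d : ℝ) / (Fintype.card V : ℝ) * (A.card : ℝ) ^ 2 +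
        lam / (Fintype.card V : ℝ) * (A.card : ℝ) * ((Fintype.card V : ℝ) - (A.card : ℝ)) ≤
      (((A ×ˢ A).filter fun p => G.Adj p.1 p.2).card : ℝ) :=
  stmt_5_general V G d hreg lam hmin A
end

section
/- Let n ≥ m ≥ 1 be integers, set p = m/n, let X be an n-element set and let 𝒬 be any family of subsets of X. Then the number of sets A ∈ 𝒬 with |A| = m, divided by binom(n,m), is at most 3·√m times the sum over all A ∈ 𝒬 of p^{|A|}·(1−p)^{n−|A|}. (In probabilistic language: the probability that a uniformly random m-subset of X lies in 𝒬 is at most 3√m times the probability that a p-random subset of X lies in 𝒬.) -/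
/-!
Only the sets of size `m` matter: they contribute `|Q_m| · p^m (1-p)^(n-m)` to the right-hand
side, so it suffices that the binomial `(n, p)` law puts mass at least `1 / (3√m)` on its mode `m`.
Writing `k! = s_k · √(2k) (k/e)^k` with `s_k` the Stirling sequence, the exponential factors cancel
exactly against `p^m (1-p)^q` (`q = n - m`), leaving `s_n √(2n) / (s_m √(2m) · s_q √(2q))`.
The effective bounds `√π ≤ s_k ≤ s_1 = e/√2` then bound this below by `√(2π) / (e² √m)`,
and `e² ≤ 3√(2π)`.
-/

open Real Stirling

lemma Stirling.stirlingSeq_le_exp_one_div_sqrt_two {k : ℕ} (hk : k ≠ 0) :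
    stirlingSeq k ≤ exp 1 / √2 := by
  obtain ⟨j, rfl⟩ := Nat.exists_eq_succ_of_ne_zero hk
  simpa using stirlingSeq'_antitone (Nat.zero_le j)

lemma Stirling.factorial_eq_stirlingSeq_mul {k : ℕ} (hk : k ≠ 0) :
    (k.factorial : ℝ) = stirlingSeq k * (√(2 * k) * (k / exp 1) ^ k) := by
  have : (0 : ℝ) < k := by positivity
  rw [stirlingSeq, div_mul_cancel₀ _ (by positivity)]

lemma choose_mul_pow_mul_pow_eq_stirlingSeq {m q : ℕ} (hm : m ≠ 0) (hq : q ≠ 0) :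
    ((m + q).choose m : ℝ) * (((m : ℝ) / (m + q)) ^ m * ((q : ℝ) / (m + q)) ^ q) =
      stirlingSeq (m + q) * √(2 * (m + q)) /
        (stirlingSeq m * √(2 * m) * (stirlingSeq q * √(2 * q))) := by
  have hn : (m : ℝ) + q ≠ 0 := by positivity
  have hpow : (((m : ℝ) + q) / exp 1) ^ (m + q) *
      (((m : ℝ) / (m + q)) ^ m * ((q : ℝ) / (m + q)) ^ q) =
        ((m : ℝ) / exp 1) ^ m * ((q : ℝ) / exp 1) ^ q := by
    rw [pow_add, mul_mul_mul_comm, ← mul_pow, ← mul_pow]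
    congr 2 <;> field_simp
  have hsm := (sqrt_pos.2 pi_pos).trans_le (sqrt_pi_le_stirlingSeq hm)
  have hsq := (sqrt_pos.2 pi_pos).trans_le (sqrt_pi_le_stirlingSeq hq)
  have : (0 : ℝ) < √(2 * m) := by positivity
  have : (0 : ℝ) < √(2 * q) := by positivity
  rw [Nat.cast_choose ℝ (Nat.le_add_right m q), Nat.add_sub_cancel_left,
    factorial_eq_stirlingSeq_mul hm, factorial_eq_stirlingSeq_mul hq,
    factorial_eq_stirlingSeq_mul (by omega), Nat.cast_add, div_mul_eq_mul_div, mul_assoc,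
    mul_assoc, hpow]
  field_simp

lemma exp_one_sq_le_three_mul_sqrt_two_mul_pi : exp 1 ^ 2 ≤ 3 * √(2 * π) := by
  have he : exp 1 ^ 4 < 2.7182818286 ^ 4 := by gcongr; exact exp_one_lt_d9
  rw [← pow_le_pow_iff_left₀ (by positivity) (by positivity) two_ne_zero, ← pow_mul, mul_pow,
    sq_sqrt (by positivity)]
  norm_num at he ⊢
  linarith [pi_gt_d2]

lemma one_le_three_mul_sqrt_mul_choose_mul_pow_mul_pow {m q : ℕ} (hm : m ≠ 0) (hq : q ≠ 0) :
    1 ≤ 3 * √m *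
      (((m + q).choose m : ℝ) * (((m : ℝ) / (m + q)) ^ m * ((q : ℝ) / (m + q)) ^ q)) := by
  have hsm := (sqrt_pos.2 pi_pos).trans_le (sqrt_pi_le_stirlingSeq hm)
  have hsq := (sqrt_pos.2 pi_pos).trans_le (sqrt_pi_le_stirlingSeq hq)
  have hsn := sqrt_pi_le_stirlingSeq (n := m + q) (by omega)
  rw [choose_mul_pow_mul_pow_eq_stirlingSeq hm hq, ← mul_div_assoc]
  calc (1 : ℝ)
      ≤ 3 * √(2 * π) / exp 1 ^ 2 := by
        rw [one_le_div (by positivity)]; exact exp_one_sq_le_three_mul_sqrt_two_mul_pi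
    _ = 3 * √m * (√π * √(2 * q)) / (exp 1 / √2 * √(2 * m) * (exp 1 / √2 * √(2 * q))) := by
        rw [sqrt_mul zero_le_two (m : ℝ), sqrt_mul zero_le_two π]
        have : (0 : ℝ) < √(2 * q) := by positivity
        field_simp
    _ ≤ 3 * √m * (stirlingSeq (m + q) * √(2 * (m + q))) /
          (stirlingSeq m * √(2 * m) * (stirlingSeq q * √(2 * q))) := by
        have : (0 : ℝ) ≤ stirlingSeq (m + q) := (sqrt_nonneg π).trans hsn
        gcongr
        · linarith
        · exact stirlingSeq_le_exp_one_div_sqrt_two hm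
        · exact stirlingSeq_le_exp_one_div_sqrt_two hq

lemma inv_choose_le_three_mul_sqrt_mul_pow_mul_pow {n m : ℕ} (hm : m ≠ 0) (hmn : m ≤ n) :
    (n.choose m : ℝ)⁻¹ ≤ 3 * √m * (((m : ℝ) / n) ^ m * (1 - (m : ℝ) / n) ^ (n - m)) := by
  obtain ⟨q, rfl⟩ := Nat.exists_eq_add_of_le hmn
  have hm' : (0 : ℝ) < m := by positivity
  rcases eq_or_ne q 0 with rfl | hq
  · have : (1 : ℝ) ≤ √m := one_le_sqrt.2 (by exact_mod_cast Nat.one_le_iff_ne_zero.2 hm)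
    simp [div_self hm'.ne']
    linarith
  have hsub : 1 - (m : ℝ) / ↑(m + q) = q / (m + q) := by
    push_cast
    field_simp
    ring
  rw [inv_le_iff_one_le_mul₀ (by exact_mod_cast Nat.choose_pos hmn), hsub, Nat.add_sub_cancel_left,
    mul_left_comm]
  push_cast
  exact (one_le_three_mul_sqrt_mul_choose_mul_pow_mul_pow hm hq).trans_eq (by ring)

theorem stmt_8_general (n m : ℕ) (hm : 1 ≤ m) (hmn : m ≤ n)
    (X : Type) (Q : Finset (Finset X)) :
    ((Q.filter fun A => A.card = m).card : ℝ) / (n.choose m : ℝ) ≤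
      3 * Real.sqrt (m : ℝ) *
        ∑ A ∈ Q, ((m : ℝ) / (n : ℝ)) ^ A.card * (1 - (m : ℝ) / (n : ℝ)) ^ (n - A.card) := by
  set p : ℝ := (m : ℝ) / n
  have hp' : p ≤ 1 := div_le_one_of_le₀ (by exact_mod_cast hmn) (Nat.cast_nonneg n)
  calc ((Q.filter fun A => A.card = m).card : ℝ) / (n.choose m : ℝ)
      = (Q.filter fun A => A.card = m).card * (n.choose m : ℝ)⁻¹ := div_eq_mul_inv _ _
    _ ≤ (Q.filter fun A => A.card = m).card * (3 * √m * (p ^ m * (1 - p) ^ (n - m))) := by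
        gcongr
        exact inv_choose_le_three_mul_sqrt_mul_pow_mul_pow (by omega) hmn
    _ = 3 * √m * ∑ A ∈ Q.filter (fun A => A.card = m), p ^ A.card * (1 - p) ^ (n - A.card) := by
        rw [Finset.sum_congr rfl fun A hA => by rw [(Finset.mem_filter.1 hA).2],
          Finset.sum_const, nsmul_eq_mul]
        ring
    _ ≤ 3 * √m * ∑ A ∈ Q, p ^ A.card * (1 - p) ^ (n - A.card) := by
        have : 0 ≤ 1 - p := sub_nonneg.2 hp'
        gcongr
        exact Finset.filter_subset _ _

theorem stmt_8 (n m : ℕ) (hm : 1 ≤ m) (hmn : m ≤ n)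
    (X : Type) [Fintype X] [DecidableEq X] (hX : Fintype.card X = n)
    (Q : Finset (Finset X)) :
    ((Q.filter fun A => A.card = m).card : ℝ) / (n.choose m : ℝ) ≤
      3 * Real.sqrt (m : ℝ) *
        ∑ A ∈ Q, ((m : ℝ) / (n : ℝ)) ^ A.card * (1 - (m : ℝ) / (n : ℝ)) ^ (n - A.card) :=
  stmt_8_general n m hm hmn X Q
end

section
/- Let G be a finite abelian group of odd order n, let H be a subgroup of G of index q, and let B ⊆ G be a union of cosets of H such that B ∪ (B + B) = G, where B + B = {b + b' : b, b' ∈ B}. Then for every x ∈ G∖B, the number of unordered pairs {y, z} of distinct elements of B with x = y + z is at least n/(2q) − 1/2. -/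
/-!
Write `x = y + z` with `y, z ∈ B`. Since `B` is a union of cosets of `H`, every `a ∈ y + H`
has `a ∈ B` and `x - a ∈ z + H ⊆ B`, so `{a, x - a}` is a representation of `x` as a sum of
two elements of `B` unless `a = x - a`. As `|G|` is odd, doubling is injective and this
exception occurs at most once; each pair arises from at most two values of `a`. Hence the
number of pairs is at least `(|H| - 1) / 2 = n / (2q) - 1 / 2`.
-/

open Finset

variable {G : Type*} [AddCommGroup G] [DecidableEq G]

def pairRepresentations (B : Set G) (x : G) : Set (Finset G) :=
  {p | p.card = 2 ∧ (↑p : Set G) ⊆ B ∧ ∃ y z : G, y ≠ z ∧ p = {y, z} ∧ y + z = x}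

theorem card_le_two_mul_ncard_pairRepresentations [Finite G] {B : Set G} {x : G}
    (A : Finset G) (hA : ∀ a ∈ A, a ∈ B ∧ x - a ∈ B ∧ a ≠ x - a) :
    #A ≤ 2 * (pairRepresentations B x).ncard := by
  let pair : G → Finset G := fun a => {a, x - a}
  have hpair : ∀ a ∈ A, pair a ∈ pairRepresentations B x := by
    intro a ha
    obtain ⟨haB, hxaB, hne⟩ := hA a ha
    refine ⟨card_pair hne, ?_, a, x - a, hne, rfl, add_sub_cancel a x⟩
    simpa [pair, Set.insert_subset_iff] using ⟨haB, hxaB⟩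
  have hfiber : ∀ p ∈ A.image pair, #{a ∈ A | pair a = p} ≤ 2 := by
    intro p hp
    obtain ⟨a₀, -, rfl⟩ := mem_image.mp hp
    have hsub : {a ∈ A | pair a = pair a₀} ⊆ pair a₀ := fun a ha => by
      rw [← (mem_filter.mp ha).2]
      exact mem_insert_self a _
    exact (card_le_card hsub).trans card_le_two
  calc #A ≤ 2 * #(A.image pair) := card_le_mul_card_image A 2 hfiber
    _ = 2 * (↑(A.image pair) : Set (Finset G)).ncard := by rw [Set.ncard_coe_finset]
    _ ≤ 2 * (pairRepresentations B x).ncard := by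
      gcongr
      · exact Set.toFinite _
      · simpa [Set.subset_def] using hpair

theorem card_le_two_mul_ncard_pairRepresentations_add_one [Finite G]
    (hodd : Odd (Nat.card G)) {B : Set G} {x : G}
    (A : Finset G) (hA : ∀ a ∈ A, a ∈ B ∧ x - a ∈ B) :
    #A ≤ 2 * (pairRepresentations B x).ncard + 1 := by
  have hhalf : #{a ∈ A | a = x - a} ≤ 1 := by
    refine card_le_one.mpr fun a ha b hb => ?_
    apply (Nat.coprime_two_right.mpr hodd).nsmul_right_bijective.injective
    simp only [two_nsmul, eq_sub_iff_add_eq.mp (mem_filter.mp ha).2,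
      eq_sub_iff_add_eq.mp (mem_filter.mp hb).2]
  have hrest := card_le_two_mul_ncard_pairRepresentations {a ∈ A | ¬a = x - a} fun a ha => by
    obtain ⟨haA, hne⟩ := mem_filter.mp ha
    exact ⟨(hA a haA).1, (hA a haA).2, hne⟩
  have := card_filter_add_card_filter_not (s := A) (p := fun a => a = x - a)
  omega

theorem stmt_11 (G : Type) [AddCommGroup G] [Fintype G] [DecidableEq G]
    (n q : ℕ) (hn : Fintype.card G = n) (hodd : Odd n)
    (H : AddSubgroup G) (hq : H.index = q)
    (B : Set G)
    (hcosets : ∀ b ∈ B, ∀ h ∈ H, b + h ∈ B)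
    (hcover : ∀ x : G, x ∈ B ∨ ∃ y ∈ B, ∃ z ∈ B, y + z = x)
    (x : G) (hx : x ∉ B) :
    (n : ℝ) / (2 * (q : ℝ)) - 1 / 2 ≤
      (({p : Finset G | p.card = 2 ∧ (↑p : Set G) ⊆ B ∧
          ∃ y z : G, y ≠ z ∧ p = {y, z} ∧ y + z = x} : Set (Finset G)).ncard : ℝ) := by
  classical
  obtain ⟨y, hy, z, hz, rfl⟩ := (hcover x).resolve_left hx
  let coset : Finset G := (H : Set G).toFinset.map (addLeftEmbedding y)
  have hcoset : ∀ a ∈ coset, a ∈ B ∧ y + z - a ∈ B := by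
    simp only [coset, mem_map, Set.mem_toFinset, SetLike.mem_coe, addLeftEmbedding_apply]
    rintro _ ⟨h, hh, rfl⟩
    refine ⟨hcosets y hy h hh, ?_⟩
    rw [show y + z - (y + h) = z + -h by abel]
    exact hcosets z hz (-h) (neg_mem hh)
  have hcount := card_le_two_mul_ncard_pairRepresentations_add_one
    (by rwa [Nat.card_eq_fintype_card, hn]) coset hcoset
  have hn_card : n = #coset * q := by
    rw [← hn, ← hq, ← Nat.card_eq_fintype_card, ← H.card_mul_index, card_map,
      ← Nat.card_eq_card_toFinset, SetLike.coe_sort_coe]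
  have hq0 : (0 : ℝ) < q := by exact_mod_cast Nat.pos_of_ne_zero (hq ▸ H.index_ne_zero_of_finite)
  have hcount' : (#coset : ℝ) ≤ 2 * (pairRepresentations B (y + z)).ncard + 1 := by
    exact_mod_cast hcount
  rw [hn_card, Nat.cast_mul, mul_div_mul_right _ _ hq0.ne']
  change _ ≤ ((pairRepresentations B (y + z)).ncard : ℝ)
  linarith
end

section
/- Let G be a finite abelian group, let S ⊆ G be nonempty with 0 ∉ S, and let δ > 0. If λ(S) ≥ (δ − 1)·|S|, then λ(S ∪ (−S)) ≥ (δ/2 − 1)·|S ∪ (−S)|, where −S = {−s : s ∈ S}. -/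
/-!
Write `S ∪ -S` as the disjoint union of `S` and `T = -S \ S`, so that
`A(S ∪ -S) = A(S) + A(T)`. Cayley matrices of an abelian group commute, so an eigenvector of
`A(S ∪ -S)` for `μ` can be chosen to be also an eigenvector of `A(S)`, for some `c`; it is then an
eigenvector of `A(T)` for `μ - c`, and Gershgorin's bound gives `‖μ - c‖ ≤ |T|`. Hence
`Re μ ≥ (δ - 1)|S| - |T|`, which is at least `(δ/2 - 1)(|S| + |T|)` because `|T| ≤ |S|`.
-/

open Pointwise

/-- The adjacency matrix of the directed Cayley graph of `S`: `A(S)_{x,y} = 1` iff `y − x ∈ S`. -/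
noncomputable def cayleyMatrix {G : Type*} [AddCommGroup G] [Fintype G] [DecidableEq G]
    (S : Finset G) : Matrix G G ℂ :=
  Matrix.of fun x y => if y - x ∈ S then (1 : ℂ) else 0

namespace Module.End
variable {K V : Type*} [Field K] [IsAlgClosed K] [AddCommGroup V] [Module K V]
  [FiniteDimensional K V]

theorem exists_hasEigenvector_of_commute {f g : End K V} (hfg : Commute f g) {μ : K}
    (hμ : f.HasEigenvalue μ) : ∃ c v, f.HasEigenvector μ v ∧ g.HasEigenvector c v := by
  have hmaps := mapsTo_genEigenspace_of_comm hfg μ 1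
  have : Nontrivial (f.eigenspace μ) := Submodule.nontrivial_iff_ne_bot.mpr hμ
  obtain ⟨c, hc⟩ := exists_eigenvalue (g.restrict hmaps)
  obtain ⟨⟨v, hv⟩, hvc⟩ := hc.exists_hasEigenvector
  refine ⟨c, v, ⟨hv, fun h => hvc.2 (by simp [h])⟩, ?_, fun h => hvc.2 (by simp [h])⟩
  exact mem_eigenspace_iff.mpr (congrArg Subtype.val hvc.apply_eq_smul)

end Module.End

theorem Matrix.norm_le_of_hasEigenvalue_of_forall_sum_norm_le {n K : Type*} [Fintype n]
    [DecidableEq n] [NormedField K] {A : Matrix n n K} {μ : K} {r : ℝ}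
    (hμ : Module.End.HasEigenvalue A.toLin' μ) (hA : ∀ i, ∑ j, ‖A i j‖ ≤ r) : ‖μ‖ ≤ r := by
  obtain ⟨k, hk⟩ := eigenvalue_mem_ball hμ
  rw [Metric.mem_closedBall, dist_eq_norm] at hk
  calc ‖μ‖ ≤ ‖μ - A k k‖ + ‖A k k‖ := norm_le_norm_sub_add μ (A k k)
    _ ≤ ∑ j, ‖A k j‖ := by
        rw [← Finset.add_sum_erase _ _ (Finset.mem_univ k)]; linarith
    _ ≤ r := hA k

section Cayley
variable {G : Type*} [AddCommGroup G] [Fintype G] [DecidableEq G]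

theorem commute_cayleyMatrix (S T : Finset G) : Commute (cayleyMatrix S) (cayleyMatrix T) := by
  ext x y
  simp only [Matrix.mul_apply, cayleyMatrix, Matrix.of_apply]
  refine Fintype.sum_equiv (Equiv.subLeft (x + y)) _ _ fun z => ?_
  rw [Equiv.subLeft_apply, show x + y - z - x = y - z by abel,
    show y - (x + y - z) = z - x by abel, mul_comm]

theorem cayleyMatrix_union_of_disjoint {S T : Finset G} (hST : Disjoint S T) :
    cayleyMatrix (S ∪ T) = cayleyMatrix S + cayleyMatrix T := by
  ext x y
  simp only [cayleyMatrix, Matrix.add_apply, Matrix.of_apply, Finset.mem_union]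
  by_cases hS : y - x ∈ S
  · simp [hS, Finset.disjoint_left.mp hST hS]
  · simp [hS]

theorem sum_norm_cayleyMatrix_apply (S : Finset G) (x : G) :
    ∑ y, ‖cayleyMatrix S x y‖ = S.card := by
  simp only [cayleyMatrix, Matrix.of_apply, apply_ite, norm_one, norm_zero]
  rw [Fintype.sum_equiv (Equiv.subRight x) (fun y => if y - x ∈ S then (1 : ℝ) else 0)
    (fun z => if z ∈ S then 1 else 0) fun y => rfl, Finset.sum_ite_mem, Finset.univ_inter,
    Finset.sum_const, nsmul_one]

theorem exists_mem_spectrum_cayleyMatrix_norm_sub_le {S T : Finset G} (hST : Disjoint S T)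
    {μ : ℂ} (hμ : μ ∈ spectrum ℂ (cayleyMatrix (S ∪ T))) :
    ∃ c ∈ spectrum ℂ (cayleyMatrix S), ‖μ - c‖ ≤ T.card := by
  rw [← Matrix.spectrum_toLin', ← Module.End.hasEigenvalue_iff_mem_spectrum] at hμ
  have hcomm : Commute (cayleyMatrix (S ∪ T)).toLin' (cayleyMatrix S).toLin' :=
    (commute_cayleyMatrix _ _).map Matrix.toLinAlgEquiv'
  obtain ⟨c, v, hμv, hcv⟩ := Module.End.exists_hasEigenvector_of_commute hcomm hμ
  have hTv : Module.End.HasEigenvector (cayleyMatrix T).toLin' (μ - c) v := by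
    refine ⟨Module.End.mem_eigenspace_iff.mpr ?_, hμv.2⟩
    rw [sub_smul, ← hμv.apply_eq_smul, ← hcv.apply_eq_smul,
      cayleyMatrix_union_of_disjoint hST, map_add, LinearMap.add_apply, add_sub_cancel_left]
  refine ⟨c, ?_, Matrix.norm_le_of_hasEigenvalue_of_forall_sum_norm_le
    (Module.End.hasEigenvalue_of_hasEigenvector hTv)
    fun x => (sum_norm_cayleyMatrix_apply T x).le⟩
  rw [← Matrix.spectrum_toLin', ← Module.End.hasEigenvalue_iff_mem_spectrum]
  exact Module.End.hasEigenvalue_of_hasEigenvector hcv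

end Cayley

theorem stmt_18_general (G : Type) [AddCommGroup G] [Fintype G] [DecidableEq G]
    (S : Finset G)
    (δ : ℝ) (hδ : 0 < δ)
    -- λ(S) ≥ (δ − 1)·|S| : every eigenvalue of A(S) has real part at least (δ − 1)·|S|
    (h : ∀ μ ∈ spectrum ℂ (cayleyMatrix S), (δ - 1) * (S.card : ℝ) ≤ μ.re) :
    -- λ(S ∪ (−S)) ≥ (δ/2 − 1)·|S ∪ (−S)|
    ∀ μ ∈ spectrum ℂ (cayleyMatrix (S ∪ -S)),
      (δ / 2 - 1) * (((S ∪ -S).card : ℕ) : ℝ) ≤ μ.re := by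
  intro μ hμ
  have hunion : S ∪ -S = S ∪ (-S \ S) := Finset.union_sdiff_self_eq_union.symm
  rw [hunion] at hμ ⊢
  obtain ⟨c, hc, hμc⟩ := exists_mem_spectrum_cayleyMatrix_norm_sub_le Finset.disjoint_sdiff hμ
  have hcard : ((-S \ S).card : ℝ) ≤ S.card := by
    exact_mod_cast (Finset.card_le_card Finset.sdiff_subset).trans (Finset.card_neg S).le
  have hre : c.re - μ.re ≤ ‖μ - c‖ := by
    simpa using (Complex.re_le_norm (c - μ)).trans_eq (norm_sub_rev c μ)
  rw [Finset.card_union_of_disjoint Finset.disjoint_sdiff, Nat.cast_add]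
  linarith [h c hc, mul_le_mul_of_nonneg_left hcard hδ.le]

theorem stmt_18 (G : Type) [AddCommGroup G] [Fintype G] [DecidableEq G]
    (S : Finset G) (hS : S.Nonempty) (h0 : (0 : G) ∉ S)
    (δ : ℝ) (hδ : 0 < δ)
    -- λ(S) ≥ (δ − 1)·|S| : every eigenvalue of A(S) has real part at least (δ − 1)·|S|
    (h : ∀ μ ∈ spectrum ℂ (cayleyMatrix S), (δ - 1) * (S.card : ℝ) ≤ μ.re) :
    -- λ(S ∪ (−S)) ≥ (δ/2 − 1)·|S ∪ (−S)|
    ∀ μ ∈ spectrum ℂ (cayleyMatrix (S ∪ -S)),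
      (δ / 2 - 1) * (((S ∪ -S).card : ℕ) : ℝ) ≤ μ.re :=
  stmt_18_general G S δ hδ h
end

section
/- Let c ∈ (0,1], let m ≥ 1, and let v₁, …, v_m be complex numbers of modulus 1. Suppose that for every ζ ∈ ℂ with |ζ| = 1, at most (1 − c)·m of the v_i lie in the open arc of the unit circle of angular length π/3 centered at ζ. Then |v₁ + ⋯ + v_m| ≤ (1 − c + c·cos(π/6))·m. -/
/-!
Rotate so that the sum points in the positive real direction: if `ζ` is the direction of
`S = ∑ vᵢ`, then `‖S‖ = ∑ Re (vᵢ / ζ) = ∑ cos (arg (vᵢ / ζ))`. Each term is at most `1`, and at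
most `cos (π/6)` unless `vᵢ` lies in the arc around `ζ`; since at most `(1 - c) m` of the `vᵢ`
do, `‖S‖ ≤ (1 - c) m + c m cos (π/6)`.
-/

open Real

namespace Complex

theorem exists_norm_eq_one_norm_eq_re_div (z : ℂ) : ∃ ζ : ℂ, ‖ζ‖ = 1 ∧ ‖z‖ = (z / ζ).re := by
  refine ⟨exp (arg z * I), norm_exp_ofReal_mul_I _, ?_⟩
  rw [(div_eq_iff (exp_ne_zero _)).2 (norm_mul_exp_arg_mul_I z).symm, ofReal_re]

theorem re_le_norm_mul_cos_of_le_abs_arg {u : ℂ} {θ : ℝ} (hθ : 0 ≤ θ) (h : θ ≤ |arg u|) :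
    u.re ≤ ‖u‖ * Real.cos θ := by
  rw [← norm_mul_cos_arg, ← Real.cos_abs (arg u)]
  gcongr
  exact Real.cos_le_cos_of_nonneg_of_le_pi hθ (abs_arg_le_pi u) h

end Complex

theorem Finset.sum_le_card_mul_add_ncard_mul {ι : Type*} [Fintype ι] {f : ι → ℝ}
    {p : ι → Prop} {b : ℝ} (h1 : ∀ i, f i ≤ 1) (hb : ∀ i, ¬ p i → f i ≤ b) :
    ∑ i, f i ≤ Fintype.card ι * b + {i | p i}.ncard * (1 - b) := by
  classical
  calc ∑ i, f i ≤ ∑ i, (b + if p i then 1 - b else 0) := by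
        gcongr with i
        split_ifs with hi
        · linarith [h1 i]
        · linarith [hb i hi]
    _ = Fintype.card ι * b + {i | p i}.ncard * (1 - b) := by
        rw [Set.ncard_eq_toFinset_card']
        simp only [Finset.sum_add_distrib, Finset.sum_ite, Finset.sum_const, Finset.card_univ,
          nsmul_eq_mul, mul_zero, add_zero, Set.toFinset_ofPred]

theorem stmt_19_general (c : ℝ) (m : ℕ)
    (v : Fin m → ℂ) (hv : ∀ i, ‖v i‖ = 1)
    -- for every unit ζ, at most (1 − c)·m of the vᵢ lie in the open arc of angular
    -- length π/3 centred at ζ (i.e. have angular distance < π/6 from ζ)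
    (harc : ∀ ζ : ℂ, ‖ζ‖ = 1 →
      (({i : Fin m | |Complex.arg (v i / ζ)| < Real.pi / 6} : Set (Fin m)).ncard : ℝ) ≤
        (1 - c) * (m : ℝ)) :
    ‖∑ i, v i‖ ≤ (1 - c + c * Real.cos (Real.pi / 6)) * (m : ℝ) := by
  obtain ⟨ζ, hζ, hS⟩ := Complex.exists_norm_eq_one_norm_eq_re_div (∑ i, v i)
  have hu : ∀ i, ‖v i / ζ‖ = 1 := fun i => by rw [norm_div, hv, hζ, div_one]
  have hcos : 0 ≤ 1 - Real.cos (π / 6) := sub_nonneg.2 (cos_le_one _)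
  calc ‖∑ i, v i‖ = ∑ i, (v i / ζ).re := by rw [hS, Finset.sum_div, Complex.re_sum]
    _ ≤ m * Real.cos (π / 6) +
          ({i : Fin m | |Complex.arg (v i / ζ)| < π / 6}.ncard : ℝ) * (1 - Real.cos (π / 6)) := by
        simpa only [Fintype.card_fin] using Finset.sum_le_card_mul_add_ncard_mul
          (fun i => (Complex.re_le_norm _).trans (hu i).le)
          (fun i hi => (Complex.re_le_norm_mul_cos_of_le_abs_arg (by positivity)
            (not_lt.1 hi)).trans_eq (by rw [hu i, one_mul]))
    _ ≤ m * Real.cos (π / 6) + (1 - c) * m * (1 - Real.cos (π / 6)) := by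
        gcongr
        exact harc ζ hζ
    _ = (1 - c + c * Real.cos (π / 6)) * m := by ring

theorem stmt_19 (c : ℝ) (hc : 0 < c) (hc1 : c ≤ 1) (m : ℕ) (hm : 1 ≤ m)
    (v : Fin m → ℂ) (hv : ∀ i, ‖v i‖ = 1)
    -- for every unit ζ, at most (1 − c)·m of the vᵢ lie in the open arc of angular
    -- length π/3 centred at ζ (i.e. have angular distance < π/6 from ζ)
    (harc : ∀ ζ : ℂ, ‖ζ‖ = 1 →
      (({i : Fin m | |Complex.arg (v i / ζ)| < Real.pi / 6} : Set (Fin m)).ncard : ℝ) ≤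
        (1 - c) * (m : ℝ)) :
    ‖∑ i, v i‖ ≤ (1 - c + c * Real.cos (Real.pi / 6)) * (m : ℝ) :=
  stmt_19_general c m v hv harc
end
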